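/- arXiv:1902.00640 — 2 statements merged into one kernel-verified Lean document; each statement's English description precedes it below -/
import Mathlib

section
/- Let d ≥ 1, let f : ℝ^d × ℝ → ℝ^d be a time-dependent vector field that is continuously differentiable in its first (space) argument, and let q : ℝ^d × ℝ → ℝ be everywhere positive and continuously differentiable. Assume q and f satisfy the continuity equation: for all x ∈ ℝ^d and t ∈ ℝ, ∂q/∂t(x,t) = −∇_x · (q(·,t) f(·,t))(x). If x : ℝ → ℝ^d is differentiable with x'(t) = f(x(t), t) for all t, then for all t the map t ↦ log q(x(t), t) is differentiable and d/dt [log q(x(t), t)] = −(∇_x · f(·,t))(x(t)). -/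
/-- The divergence of a vector field `g : ℝ^d → ℝ^d` at a point `x`, defined as the trace of
its Fréchet derivative at `x`. -/
noncomputable def divergence {d : ℕ}
    (g : EuclideanSpace ℝ (Fin d) → EuclideanSpace ℝ (Fin d))
    (x : EuclideanSpace ℝ (Fin d)) : ℝ :=
  LinearMap.trace ℝ (EuclideanSpace ℝ (Fin d)) (fderiv ℝ g x).toLinearMap

/-- Trace of the rank one map `v ↦ (φ v) • w` is `φ w`. -/
lemma trace_smulRight_aux {d : ℕ} (φ : EuclideanSpace ℝ (Fin d) →L[ℝ] ℝ)
    (w : EuclideanSpace ℝ (Fin d)) :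
    LinearMap.trace ℝ (EuclideanSpace ℝ (Fin d)) (φ.smulRight w).toLinearMap = φ w := by
  have h : (φ.smulRight w).toLinearMap
      = dualTensorHom ℝ (EuclideanSpace ℝ (Fin d)) (EuclideanSpace ℝ (Fin d))
        ((φ : EuclideanSpace ℝ (Fin d) →ₗ[ℝ] ℝ) ⊗ₜ w) := by
    ext v
    simp [dualTensorHom_apply]
  rw [h, LinearMap.trace_eq_contract_apply, contractLeft_apply]
  rfl

/-- If `q, f` satisfy the continuity equation `∂q/∂t = -∇·(q f)`, `q > 0`, and `x(t)` follows the
flow `x'(t) = f(x(t), t)`, then `d/dt log q(x(t), t) = -(∇·f(·,t))(x(t))`. -/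
theorem stmt_0 {d : ℕ} (hd : 1 ≤ d)
    (f : EuclideanSpace ℝ (Fin d) → ℝ → EuclideanSpace ℝ (Fin d))
    (q : EuclideanSpace ℝ (Fin d) → ℝ → ℝ)
    (hf : ∀ t : ℝ, ContDiff ℝ 1 (fun x => f x t))
    (hq_pos : ∀ x t, 0 < q x t)
    (hq : ContDiff ℝ 1 (fun p : EuclideanSpace ℝ (Fin d) × ℝ => q p.1 p.2))
    (hcont : ∀ (x : EuclideanSpace ℝ (Fin d)) (t : ℝ),
      deriv (fun s => q x s) t = - divergence (fun y => q y t • f y t) x)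
    (x : ℝ → EuclideanSpace ℝ (Fin d))
    (hx : ∀ t : ℝ, HasDerivAt x (f (x t) t) t) :
    ∀ t : ℝ, HasDerivAt (fun s => Real.log (q (x s) s))
      (- divergence (fun y => f y t) (x t)) t := by
  intro t
  have hQd : Differentiable ℝ (fun p : EuclideanSpace ℝ (Fin d) × ℝ => q p.1 p.2) :=
    hq.differentiable one_ne_zero
  set L : EuclideanSpace ℝ (Fin d) × ℝ →L[ℝ] ℝ :=
    fderiv ℝ (fun p : EuclideanSpace ℝ (Fin d) × ℝ => q p.1 p.2) (x t, t) with hLdef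
  have h1 : HasFDerivAt (fun p : EuclideanSpace ℝ (Fin d) × ℝ => q p.1 p.2) L (x t, t) :=
    (hQd (x t, t)).hasFDerivAt
  -- derivative of the composite s ↦ q (x s) s
  have hγ : HasDerivAt (fun s : ℝ => ((x s, s) : EuclideanSpace ℝ (Fin d) × ℝ))
      (f (x t) t, 1) t := HasDerivAt.prodMk (hx t) (hasDerivAt_id t)
  have h2 : HasDerivAt (fun s => q (x s) s) (L (f (x t) t, 1)) t := by
    have := h1.comp_hasDerivAt_of_eq t hγ rfl
    exact this
  -- spatial partial derivative
  have hinc : HasFDerivAt (fun y : EuclideanSpace ℝ (Fin d) =>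
      ((y, t) : EuclideanSpace ℝ (Fin d) × ℝ))
      (ContinuousLinearMap.inl ℝ (EuclideanSpace ℝ (Fin d)) ℝ) (x t) :=
    HasFDerivAt.prodMk (hasFDerivAt_id (x t)) (hasFDerivAt_const t (x t))
  set Dq : EuclideanSpace ℝ (Fin d) →L[ℝ] ℝ :=
    L.comp (ContinuousLinearMap.inl ℝ (EuclideanSpace ℝ (Fin d)) ℝ) with hDqdef
  have hqx : HasFDerivAt (fun y => q y t) Dq (x t) := by
    have := h1.comp (x t) hinc
    exact this
  -- time partial derivative
  have hincs : HasDerivAt (fun s : ℝ => ((x t, s) : EuclideanSpace ℝ (Fin d) × ℝ))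
      ((0 : EuclideanSpace ℝ (Fin d)), 1) t :=
    HasDerivAt.prodMk (hasDerivAt_const t (x t)) (hasDerivAt_id t)
  have hqt : HasDerivAt (fun s => q (x t) s) (L ((0 : EuclideanSpace ℝ (Fin d)), 1)) t := by
    have := h1.comp_hasDerivAt_of_eq t hincs rfl
    exact this
  -- derivative of f in space
  have hfx : HasFDerivAt (fun y => f y t) (fderiv ℝ (fun y => f y t) (x t)) (x t) :=
    (((hf t).differentiable one_ne_zero) (x t)).hasFDerivAt
  -- product rule for q • f
  have hprod : HasFDerivAt (fun y => q y t • f y t)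
      (q (x t) t • fderiv ℝ (fun y => f y t) (x t) + Dq.smulRight (f (x t) t)) (x t) :=
    hqx.smul hfx
  -- compute divergence of q • f
  have hdiv : divergence (fun y => q y t • f y t) (x t)
      = q (x t) t * divergence (fun y => f y t) (x t) + Dq (f (x t) t) := by
    unfold divergence
    rw [hprod.fderiv]
    simp only [ContinuousLinearMap.coe_add, map_add]
    rw [trace_smulRight_aux]
    simp only [ContinuousLinearMap.coe_smul, LinearMap.map_smul, smul_eq_mul]
  -- continuity equation in terms of L
  have hct : L ((0 : EuclideanSpace ℝ (Fin d)), 1)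
      = -(q (x t) t * divergence (fun y => f y t) (x t) + Dq (f (x t) t)) := by
    rw [← hdiv, ← hcont (x t) t, hqt.deriv]
  -- decompose L (v, 1)
  have hsplit : L (f (x t) t, 1) = Dq (f (x t) t) + L ((0 : EuclideanSpace ℝ (Fin d)), 1) := by
    have h : ((f (x t) t, 1) : EuclideanSpace ℝ (Fin d) × ℝ)
        = ((f (x t) t, 0) : EuclideanSpace ℝ (Fin d) × ℝ) + (0, 1) := by simp
    rw [h, map_add]
    rfl
  have hlog : HasDerivAt (fun s => Real.log (q (x s) s))
      (L (f (x t) t, 1) / q (x t) t) t := h2.log (ne_of_gt (hq_pos (x t) t))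
  have hnum : L (f (x t) t, 1) = -(divergence (fun y => f y t) (x t) * q (x t) t) := by
    rw [hsplit, hct]; ring
  have hval : L (f (x t) t, 1) / q (x t) t = - divergence (fun y => f y t) (x t) := by
    rw [hnum, neg_div, mul_div_assoc, div_self (ne_of_gt (hq_pos (x t) t)), mul_one]
  rwa [hval] at hlog
end

section
/- Let d ≥ 1, T > 0, let f : ℝ^d × ℝ → ℝ^d be a time-dependent vector field continuously differentiable in its first (space) argument, and let q : ℝ^d × ℝ → ℝ be everywhere positive and continuously differentiable, satisfying the continuity equation ∂q/∂t(x,t) = −∇_x · (q(·,t) f(·,t))(x) for all x ∈ ℝ^d and t ∈ ℝ. If x : ℝ → ℝ^d is differentiable with x'(t) = f(x(t), t) for all t ∈ [0,T], and the map t ↦ (∇_x · f(·,t))(x(t)) is continuous on [0,T], then log q(x(T), T) = log q(x(0), 0) − ∫₀^T (∇_x · f(·,t))(x(t)) dt. -/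
open scoped TensorProduct

lemma trace_smulRight' {d : ℕ} (φ : EuclideanSpace ℝ (Fin d) →L[ℝ] ℝ)
    (v : EuclideanSpace ℝ (Fin d)) :
    LinearMap.trace ℝ (EuclideanSpace ℝ (Fin d)) (φ.smulRight v).toLinearMap = φ v := by
  have h : (φ.smulRight v).toLinearMap = dualTensorHom ℝ _ _ (φ.toLinearMap ⊗ₜ v) := by
    ext y; simp [dualTensorHom_apply]
  rw [h, LinearMap.trace_eq_contract_apply, contractLeft_apply]
  rfl

/-- If `q, f` satisfy the continuity equation, `q > 0`, and `x(t)` follows the flow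
`x'(t) = f(x(t), t)` on `[0, T]`, then
`log q(x(T), T) = log q(x(0), 0) − ∫₀^T (∇·f(·,t))(x(t)) dt`. -/
theorem stmt_2 {d : ℕ} (hd : 1 ≤ d) (T : ℝ) (hT : 0 < T)
    (f : EuclideanSpace ℝ (Fin d) → ℝ → EuclideanSpace ℝ (Fin d))
    (q : EuclideanSpace ℝ (Fin d) → ℝ → ℝ)
    (hf : ∀ t : ℝ, ContDiff ℝ 1 (fun x => f x t))
    (hq_pos : ∀ x t, 0 < q x t)
    (hq : ContDiff ℝ 1 (fun p : EuclideanSpace ℝ (Fin d) × ℝ => q p.1 p.2))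
    (hcont : ∀ (x : EuclideanSpace ℝ (Fin d)) (t : ℝ),
      deriv (fun s => q x s) t = - divergence (fun y => q y t • f y t) x)
    (x : ℝ → EuclideanSpace ℝ (Fin d))
    (hx : ∀ t ∈ Set.Icc (0 : ℝ) T, HasDerivAt x (f (x t) t) t)
    (hdiv_cont : ContinuousOn (fun t => divergence (fun y => f y t) (x t)) (Set.Icc 0 T)) :
    Real.log (q (x T) T)
      = Real.log (q (x 0) 0) - ∫ t in (0 : ℝ)..T, divergence (fun y => f y t) (x t) := by
  have hqdiff : Differentiable ℝ (fun p : EuclideanSpace ℝ (Fin d) × ℝ => q p.1 p.2) :=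
    hq.differentiable one_ne_zero
  set Dq : EuclideanSpace ℝ (Fin d) × ℝ → (EuclideanSpace ℝ (Fin d) × ℝ →L[ℝ] ℝ) :=
    fun p => fderiv ℝ (fun p : EuclideanSpace ℝ (Fin d) × ℝ => q p.1 p.2) p with hDq
  have hqF : ∀ p : EuclideanSpace ℝ (Fin d) × ℝ,
      HasFDerivAt (fun p : EuclideanSpace ℝ (Fin d) × ℝ => q p.1 p.2) (Dq p) p :=
    fun p => (hqdiff p).hasFDerivAt
  have key : ∀ (x0 : EuclideanSpace ℝ (Fin d)) (t : ℝ),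
      Dq (x0, t) (f x0 t, 1) = - (q x0 t * divergence (fun y => f y t) x0) := by
    intro x0 t
    have htime : HasDerivAt (fun s => q x0 s) (Dq (x0, t) (0, 1)) t := by
      have h1 : HasDerivAt (fun s : ℝ => ((x0, s) : EuclideanSpace ℝ (Fin d) × ℝ))
          ((0 : EuclideanSpace ℝ (Fin d)), (1 : ℝ)) t :=
        HasDerivAt.prodMk (hasDerivAt_const t x0) (hasDerivAt_id t)
      exact (hqF (x0, t)).comp_hasDerivAt t h1
    have hspace : ∀ y : EuclideanSpace ℝ (Fin d), HasFDerivAt (fun y => q y t)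
        ((Dq (y, t)).comp (ContinuousLinearMap.inl ℝ (EuclideanSpace ℝ (Fin d)) ℝ)) y := by
      intro y
      have h1 : HasFDerivAt (fun y : EuclideanSpace ℝ (Fin d) =>
            ((y, t) : EuclideanSpace ℝ (Fin d) × ℝ))
          (ContinuousLinearMap.inl ℝ (EuclideanSpace ℝ (Fin d)) ℝ) y :=
        HasFDerivAt.prodMk (hasFDerivAt_id y) (hasFDerivAt_const t y)
      exact (hqF (y, t)).comp y h1
    have hfd : HasFDerivAt (fun y => f y t) (fderiv ℝ (fun y => f y t) x0) x0 :=
      ((hf t).differentiable one_ne_zero x0).hasFDerivAt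
    have hsmul : HasFDerivAt (fun y => q y t • f y t)
        (q x0 t • fderiv ℝ (fun y => f y t) x0 +
          ((Dq (x0, t)).comp
            (ContinuousLinearMap.inl ℝ (EuclideanSpace ℝ (Fin d)) ℝ)).smulRight (f x0 t)) x0 :=
      (hspace x0).smul hfd
    have hdivqf : divergence (fun y => q y t • f y t) x0
        = q x0 t * divergence (fun y => f y t) x0 + Dq (x0, t) (f x0 t, 0) := by
      rw [divergence, hsmul.fderiv, ContinuousLinearMap.coe_add, ContinuousLinearMap.coe_smul,
        map_add, map_smul, trace_smulRight']
      simp [divergence, ContinuousLinearMap.inl_apply, smul_eq_mul]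
    have hc := hcont x0 t
    rw [htime.deriv] at hc
    have hsplit : Dq (x0, t) (f x0 t, 1) = Dq (x0, t) (f x0 t, 0) + Dq (x0, t) (0, 1) := by
      rw [← map_add]; norm_num
    rw [hsplit, hc, hdivqf]; ring
  have hlog : ∀ t ∈ Set.uIcc (0 : ℝ) T,
      HasDerivAt (fun s => Real.log (q (x s) s))
        (-(divergence (fun y => f y t) (x t))) t := by
    intro t ht
    rw [Set.uIcc_of_le hT.le] at ht
    have hcurve : HasDerivAt (fun s : ℝ => ((x s, s) : EuclideanSpace ℝ (Fin d) × ℝ))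
        (f (x t) t, 1) t :=
      HasDerivAt.prodMk (hx t ht) (hasDerivAt_id t)
    have hg : HasDerivAt (fun s => q (x s) s) (Dq (x t, t) (f (x t) t, 1)) t := by
      have := HasFDerivAt.comp_hasDerivAt (f := fun s : ℝ => ((x s, s) : EuclideanSpace ℝ (Fin d) × ℝ)) t (hqF (x t, t)) hcurve
      exact this
    have hne : q (x t) t ≠ 0 := (hq_pos (x t) t).ne'
    have h2 := hg.log hne
    rw [key (x t) t] at h2
    convert h2 using 1
    field_simp
  have hInt : IntervalIntegrable (fun t => -(divergence (fun y => f y t) (x t)))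
      MeasureTheory.volume 0 T := by
    apply ContinuousOn.intervalIntegrable
    rw [Set.uIcc_of_le hT.le]
    exact hdiv_cont.neg
  have hFTC := intervalIntegral.integral_eq_sub_of_hasDerivAt hlog hInt
  rw [intervalIntegral.integral_neg] at hFTC
  linarith [hFTC]
end
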